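/- Let f : [0,∞) → [0,∞) be nonincreasing and integrable, let p(θ) = 1 - e^{-θ}, and let c(z) = (1/2)e^{-z}. If a nonnegative number P satisfies P ≤ ∫_0^θ f(z) dz + f(θ) for all θ > 0, then (1/2)·P ≤ ∫_0^∞ p'(z) f(z) dz. -/

import Mathlib

/-!
Since `P ≤ F θ + f θ` with `F θ = ∫₀^θ f`, averaging against the probability density `e^{-θ}`
on `(0, ∞)` gives `P ≤ ∫ e^{-θ} F θ dθ + ∫ e^{-θ} f θ dθ`. By Fubini,
`∫₀^∞ e^{-θ} ∫₀^θ f(z) dz dθ = ∫₀^∞ (∫_z^∞ e^{-θ} dθ) f(z) dz = ∫₀^∞ e^{-z} f(z) dz`,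
so the right-hand side is `2 ∫₀^∞ p'(z) f(z) dz`.
-/

open MeasureTheory Set

section Primitive

variable {f g : ℝ → ℝ} {a : ℝ}

noncomputable def lowerTriangleMul (f g : ℝ → ℝ) : ℝ × ℝ → ℝ :=
  {p : ℝ × ℝ | p.2 < p.1}.indicator fun p => g p.1 * f p.2

lemma integrable_lowerTriangleMul (hf : IntegrableOn f (Ioi a)) (hg : IntegrableOn g (Ioi a)) :
    Integrable (lowerTriangleMul f g)
      ((volume.restrict (Ioi a)).prod (volume.restrict (Ioi a))) :=
  (hg.mul_prod hf).indicator (measurableSet_lt measurable_snd measurable_fst)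

lemma integral_lowerTriangleMul_fst {θ : ℝ} (hθ : a ≤ θ) :
    ∫ z in Ioi a, lowerTriangleMul f g (θ, z) = g θ * ∫ z in a..θ, f z := by
  have hsection :
      (fun z => lowerTriangleMul f g (θ, z)) = (Iio θ).indicator fun z => g θ * f z := by
    ext z
    simp only [lowerTriangleMul, indicator_apply, mem_ofPred_eq, mem_Iio]
  rw [hsection, setIntegral_indicator measurableSet_Iio, Ioi_inter_Iio, integral_const_mul,
    intervalIntegral.integral_of_le hθ, integral_Ioc_eq_integral_Ioo]

lemma integral_lowerTriangleMul_snd {z : ℝ} (hz : a ≤ z) :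
    ∫ θ in Ioi a, lowerTriangleMul f g (θ, z) = (∫ θ in Ioi z, g θ) * f z := by
  have hsection :
      (fun θ => lowerTriangleMul f g (θ, z)) = (Ioi z).indicator fun θ => g θ * f z := by
    ext θ
    simp only [lowerTriangleMul, indicator_apply, mem_ofPred_eq, mem_Ioi]
  rw [hsection, setIntegral_indicator measurableSet_Ioi, Ioi_inter_Ioi, sup_eq_right.mpr hz,
    integral_mul_const]

lemma integrableOn_mul_intervalIntegral (hf : IntegrableOn f (Ioi a))
    (hg : IntegrableOn g (Ioi a)) :
    IntegrableOn (fun θ => g θ * ∫ z in a..θ, f z) (Ioi a) :=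
  IntegrableOn.congr_fun (integrable_lowerTriangleMul hf hg).integral_prod_left
    (fun _ hθ => integral_lowerTriangleMul_fst (le_of_lt hθ)) measurableSet_Ioi

theorem integral_mul_intervalIntegral (hf : IntegrableOn f (Ioi a))
    (hg : IntegrableOn g (Ioi a)) :
    ∫ θ in Ioi a, g θ * ∫ z in a..θ, f z = ∫ z in Ioi a, (∫ θ in Ioi z, g θ) * f z := calc
  _ = ∫ θ in Ioi a, ∫ z in Ioi a, lowerTriangleMul f g (θ, z) :=
    setIntegral_congr_fun measurableSet_Ioi fun _ hθ =>
      (integral_lowerTriangleMul_fst (le_of_lt hθ)).symm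
  _ = ∫ z in Ioi a, ∫ θ in Ioi a, lowerTriangleMul f g (θ, z) :=
    integral_integral_swap (integrable_lowerTriangleMul hf hg)
  _ = _ := setIntegral_congr_fun measurableSet_Ioi fun _ hz =>
      integral_lowerTriangleMul_snd (le_of_lt hz)

end Primitive

lemma integral_exp_neg_mul_intervalIntegral {f : ℝ → ℝ} (hf : IntegrableOn f (Ioi 0)) :
    ∫ θ in Ioi 0, Real.exp (-θ) * ∫ z in (0:ℝ)..θ, f z = ∫ z in Ioi 0, Real.exp (-z) * f z := by
  rw [integral_mul_intervalIntegral hf (integrableOn_exp_neg_Ioi 0)]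
  simp only [integral_exp_neg_Ioi]

lemma deriv_one_sub_exp_neg (z : ℝ) : deriv (fun t => 1 - Real.exp (-t)) z = Real.exp (-z) := by
  simpa using (((Real.hasDerivAt_exp (-z)).comp z (hasDerivAt_neg z)).const_sub 1).deriv

theorem stmt_18_general (f : ℝ → ℝ)
    (hf_int : IntegrableOn f (Set.Ioi 0))
    (P : ℝ)
    (hbound : ∀ θ > (0:ℝ), P ≤ (∫ z in (0:ℝ)..θ, f z) + f θ) :
    (1/2) * P ≤ ∫ z in Set.Ioi (0:ℝ), deriv (fun t => 1 - Real.exp (-t)) z * f z := by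
  simp only [deriv_one_sub_exp_neg]
  have hprimitive := integrableOn_mul_intervalIntegral hf_int (integrableOn_exp_neg_Ioi 0)
  have hdensity : IntegrableOn (fun z => Real.exp (-z) * f z) (Ioi 0) :=
    hf_int.bdd_mul (c := 1) (by fun_prop) <| (ae_restrict_iff' measurableSet_Ioi).2 <|
      .of_forall fun z hz => by
        rw [Real.norm_eq_abs, abs_of_pos (Real.exp_pos _), Real.exp_le_one_iff, neg_nonpos]
        exact le_of_lt hz
  have haverage : P ≤ ∫ θ in Ioi 0, Real.exp (-θ) * ((∫ z in (0:ℝ)..θ, f z) + f θ) := calc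
    P = ∫ θ in Ioi 0, Real.exp (-θ) * P := by
      rw [integral_mul_const, integral_exp_neg_Ioi_zero, one_mul]
    _ ≤ _ := setIntegral_mono_on ((integrableOn_exp_neg_Ioi 0).mul_const P)
        (by simp only [mul_add]; exact hprimitive.add hdensity) measurableSet_Ioi
        fun θ hθ => mul_le_mul_of_nonneg_left (hbound θ hθ) (Real.exp_pos _).le
  simp only [mul_add] at haverage
  rw [integral_add hprimitive hdensity, integral_exp_neg_mul_intervalIntegral hf_int] at haverage
  linarith

theorem stmt_18 (f : ℝ → ℝ)
    (hf_nonneg : ∀ x, 0 ≤ x → 0 ≤ f x)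
    (hf_anti : AntitoneOn f (Set.Ici 0))
    (hf_int : IntegrableOn f (Set.Ioi 0))
    (P : ℝ) (hP : 0 ≤ P)
    (hbound : ∀ θ > (0:ℝ), P ≤ (∫ z in (0:ℝ)..θ, f z) + f θ) :
    (1/2) * P ≤ ∫ z in Set.Ioi (0:ℝ), deriv (fun t => 1 - Real.exp (-t)) z * f z :=
  stmt_18_general f hf_int P hbound
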